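/- arXiv:2306.10519 — 6 statements merged into one kernel-verified Lean document; each statement's English description precedes it below -/
import Mathlib

section
/- Let n ≥ 1 and let f be a polynomial in two complex variables, viewed as an element of (ℂ[x])[y], which is monic in y of degree n. Then for every p ∈ ℂ with p ∉ X_f there exist an open set U ⊆ ℂ with p ∈ U and U ∩ X_f = ∅, and a homeomorphism Φ from {(x,y) ∈ ℂ × ℂ : x ∈ U and F(x,y) ≠ 0} onto U × {y ∈ ℂ : F(p,y) ≠ 0} such that the first component of Φ(x,y) equals x for every point (x,y) of the domain. (Local triviality of the first projection restricted to the complement of the curve over the complement of the critical values.) -/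
open Polynomial

/-- Evaluation of `f ∈ (ℂ[x])[y]` at the point `(x, y)`. -/
noncomputable def curveEval (f : Polynomial (Polynomial ℂ)) (x y : ℂ) : ℂ :=
  Polynomial.eval y (Polynomial.map (Polynomial.evalRingHom x) f)

/-- Evaluation of the `y`-derivative of `f` at the point `(x, y)`. -/
noncomputable def curveEvalDy (f : Polynomial (Polynomial ℂ)) (x y : ℂ) : ℂ :=
  curveEval f.derivative x y

/-- The critical-value set of the first projection restricted to the curve `{f = 0}`. -/
noncomputable def critValues (f : Polynomial (Polynomial ℂ)) : Set ℂ :=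
  {x : ℂ | ∃ y : ℂ, curveEval f x y = 0 ∧ curveEvalDy f x y = 0}

/-!
Off the critical values, `F(x, ·)` has exactly `deg_y f` roots, all simple. Every root persists
under perturbation of `x` (a monic polynomial that is small at `r` has a root near `r`), so near `p`
each root `r` of `F(p, ·)` is followed by a root `ψ_r(x)` in a small disc around `r`, and counting
shows these are all the roots over `x`; uniqueness in the discs makes the `ψ_r` continuous. Adding to
the identity a sum of tents centred at the `ψ_r(x)`, weighted by the displacements `r - ψ_r(x)`,
gives a continuous family of perturbations of the identity by contractions sending `ψ_r(x)` to `r`.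
Such a family is a homeomorphism over `U`, since the inverses satisfy a uniform Lipschitz bound.
-/

open Function Set Filter Topology
open scoped NNReal

lemma continuous_of_antilipschitzWith_of_continuous {P E F : Type*} [TopologicalSpace P]
    [PseudoMetricSpace E] [PseudoMetricSpace F] {K : ℝ≥0} {Φ : P → E → F} (hΦ : Continuous ↿Φ)
    (hK : ∀ x, AntilipschitzWith K (Φ x)) {u : P → E} (hu : Continuous fun x => Φ x (u x)) :
    Continuous u := by
  refine continuous_iff_continuousAt.2 fun x₀ => tendsto_iff_dist_tendsto_zero.2 ?_
  have hdist : ContinuousAt (fun x => dist (Φ x (u x)) (Φ x (u x₀))) x₀ :=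
    hu.continuousAt.dist (hΦ.comp (continuous_id.prodMk continuous_const)).continuousAt
  have hlim : Tendsto (fun x => K * dist (Φ x (u x)) (Φ x (u x₀))) (𝓝 x₀) (𝓝 0) := by
    simpa using hdist.tendsto.const_mul (K : ℝ)
  exact squeeze_zero (fun _ => dist_nonneg) (fun x => (hK x).le_mul_dist _ _) hlim

section FiberwiseContraction

variable {E : Type*} [NormedAddCommGroup E] {K : ℝ≥0}

lemma ContractingWith.antilipschitzWith_id_add {g : E → E} (hg : ContractingWith K g) :
    AntilipschitzWith (1 - K)⁻¹ fun y => y + g y := by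
  simpa using AntilipschitzWith.id.add_lipschitzWith hg.2 (by simpa using hg.1)

lemma ContractingWith.surjective_id_add [CompleteSpace E] {g : E → E}
    (hg : ContractingWith K g) : Surjective fun y => y + g y := by
  intro w
  have hw : ContractingWith K fun y => w - g y :=
    ⟨hg.1, LipschitzWith.of_dist_le_mul fun y y' => by
      rw [dist_sub_left]; exact hg.2.dist_le_mul y y'⟩
  exact ⟨_, (sub_eq_iff_eq_add.1 hw.fixedPoint_isFixedPt).symm⟩

variable [CompleteSpace E] {X : Type*} [TopologicalSpace X] {U : Set X} {g : X → E → E}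
  {S : X → E → Prop} {T : E → Prop}

noncomputable def Homeomorph.ofFiberwiseContracting (hgc : ContinuousOn ↿g (U ×ˢ univ))
    (hg : ∀ x ∈ U, ContractingWith K (g x)) (hST : ∀ x ∈ U, ∀ y, S x y ↔ T (y + g x y)) :
    {z : X × E // z.1 ∈ U ∧ S z.1 z.2} ≃ₜ U × {w : E // T w} where
  toFun z := (⟨z.1.1, z.2.1⟩, ⟨z.1.2 + g z.1.1 z.1.2, (hST _ z.2.1 _).1 z.2.2⟩)
  invFun w := ⟨(w.1, surjInv (hg w.1 w.1.2).surjective_id_add w.2), w.1.2,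
    (hST _ w.1.2 _).2 (by rw [surjInv_eq (f := fun y => y + g w.1 y)]; exact w.2.2)⟩
  left_inv z := by
    ext
    · rfl
    · exact leftInverse_surjInv ⟨(hg _ z.2.1).antilipschitzWith_id_add.injective,
        (hg _ z.2.1).surjective_id_add⟩ z.1.2
  right_inv w := by
    ext
    · rfl
    · exact surjInv_eq (f := fun y => y + g w.1 y) _ _
  continuous_toFun := by
    have hgz : Continuous fun z : {z : X × E // z.1 ∈ U ∧ S z.1 z.2} => g z.1.1 z.1.2 :=
      hgc.comp_continuous continuous_subtype_val fun z => ⟨z.2.1, trivial⟩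
    exact (continuous_fst.comp continuous_subtype_val).subtype_mk _ |>.prodMk
      (((continuous_snd.comp continuous_subtype_val).add hgz).subtype_mk _)
  continuous_invFun := by
    have hΦ : Continuous fun q : (U × {w : E // T w}) × E => q.2 + g q.1.1 q.2 :=
      continuous_snd.add (hgc.comp_continuous (f := fun q : (U × {w : E // T w}) × E =>
        ((q.1.1 : X), q.2)) (by fun_prop) fun q => ⟨q.1.1.2, trivial⟩)
    have hinv := continuous_of_antilipschitzWith_of_continuous
      (Φ := fun (w : U × {w : E // T w}) y => y + g w.1 y) hΦ
      (fun w => (hg _ w.1.2).antilipschitzWith_id_add)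
      (u := fun w => surjInv (hg w.1 w.1.2).surjective_id_add w.2)
      (by simp only [surjInv_eq (f := fun y => y + g _ y)]; fun_prop)
    fun_prop

end FiberwiseContraction

section Tent

variable {α : Type*} [PseudoMetricSpace α] {w : ℝ} {c y y' : α}

noncomputable def tent (w : ℝ) (c y : α) : ℝ := max (1 - dist y c / w) 0

@[simp] lemma tent_self : tent w c c = 1 := by simp [tent]

lemma tent_eq_zero (hw : 0 < w) (h : w ≤ dist y c) : tent w c y = 0 :=
  max_eq_right <| sub_nonpos.2 <| (one_le_div hw).2 h

lemma abs_tent_sub_tent_le (hw : 0 ≤ w) : |tent w c y - tent w c y'| ≤ dist y y' / w := by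
  calc |tent w c y - tent w c y'|
      ≤ |(1 - dist y c / w) - (1 - dist y' c / w)| := abs_max_sub_max_le_abs _ _ _
    _ = |dist y c - dist y' c| / w := by
        rw [show (1 - dist y c / w) - (1 - dist y' c / w) = (dist y' c - dist y c) / w by ring,
          abs_div, abs_of_nonneg hw, abs_sub_comm]
    _ ≤ dist y y' / w := by gcongr; exact abs_dist_sub_le _ _ _

lemma continuous_tent : Continuous fun q : α × α => tent w q.1 q.2 := by
  unfold tent; fun_prop

end Tent

section BumpShift

variable {E : Type*} [NormedAddCommGroup E] [NormedSpace ℝ E] {R : Finset E} {w ε : ℝ}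
  {ψ : E → E}

noncomputable def bumpShift (R : Finset E) (w : ℝ) (ψ : E → E) (y : E) : E :=
  ∑ r ∈ R, tent w (ψ r) y • (r - ψ r)

lemma add_bumpShift_eq_of_mem (hw : 0 < w) {r : E} (hr : r ∈ R)
    (hsep : ∀ s ∈ R, s ≠ r → w ≤ dist (ψ r) (ψ s)) : ψ r + bumpShift R w ψ (ψ r) = r := by
  rw [bumpShift, Finset.sum_eq_single_of_mem r hr fun s hs hsr => by
    rw [tent_eq_zero hw (hsep s hs hsr), zero_smul]]
  simp

lemma dist_bumpShift_le (hw : 0 ≤ w) (hε : ∀ r ∈ R, dist (ψ r) r ≤ ε) (y y' : E) :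
    dist (bumpShift R w ψ y) (bumpShift R w ψ y') ≤ R.card * ε / w * dist y y' := by
  rw [dist_eq_norm, bumpShift, bumpShift, ← Finset.sum_sub_distrib]
  calc ‖∑ r ∈ R, (tent w (ψ r) y • (r - ψ r) - tent w (ψ r) y' • (r - ψ r))‖
      ≤ ∑ r ∈ R, dist y y' / w * ε := by
        refine (norm_sum_le _ _).trans (Finset.sum_le_sum fun r hr => ?_)
        rw [← sub_smul, norm_smul, Real.norm_eq_abs, ← dist_eq_norm']
        exact mul_le_mul (abs_tent_sub_tent_le hw) (hε r hr) dist_nonneg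
          (div_nonneg dist_nonneg hw)
    _ = R.card * ε / w * dist y y' := by rw [Finset.sum_const, nsmul_eq_mul]; ring

lemma contractingWith_bumpShift (hw : 0 < w) (hε : ∀ r ∈ R, dist (ψ r) r ≤ ε)
    (hRε : 2 * R.card * ε ≤ w) : ContractingWith (1 / 2) (bumpShift R w ψ) := by
  refine ⟨by norm_num, LipschitzWith.of_dist_le_mul fun y y' => ?_⟩
  refine (dist_bumpShift_le hw.le hε y y').trans (mul_le_mul_of_nonneg_right ?_ dist_nonneg)
  rw [div_le_iff₀ hw]
  push_cast
  linarith

lemma add_bumpShift_mem_iff (hw : 0 < w) (hsep : ∀ r ∈ R, ∀ s ∈ R, s ≠ r → w ≤ dist (ψ r) (ψ s))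
    {K : ℝ≥0} (hK : ContractingWith K (bumpShift R w ψ)) (y : E) :
    y + bumpShift R w ψ y ∈ R ↔ ∃ r ∈ R, ψ r = y := by
  constructor
  · intro hy
    refine ⟨_, hy, hK.antilipschitzWith_id_add.injective ?_⟩
    exact add_bumpShift_eq_of_mem hw hy (hsep _ hy)
  · rintro ⟨r, hr, rfl⟩
    rwa [add_bumpShift_eq_of_mem hw hr (hsep r hr)]

lemma continuousOn_bumpShift {X : Type*} [TopologicalSpace X] {U : Set X} {ψ : E → X → E}
    (hψ : ∀ r ∈ R, ContinuousOn (ψ r) U) :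
    ContinuousOn (fun z : X × E => bumpShift R w (fun r => ψ r z.1) z.2) (U ×ˢ univ) := by
  refine continuousOn_finsetSum R fun r hr => ?_
  have hψr : ContinuousOn (fun z : X × E => ψ r z.1) (U ×ˢ univ) :=
    (hψ r hr).comp continuousOn_fst fun z hz => hz.1
  exact (continuous_tent.comp_continuousOn (hψr.prodMk continuousOn_snd)).smul
    (continuousOn_const.sub hψr)

end BumpShift

section FiniteSetFamily

variable {X E : Type*} [TopologicalSpace X]

lemma Finset.exists_pos_forall_le_dist [MetricSpace E] (s : Finset E) :
    ∃ d > 0, ∀ r ∈ s, ∀ t ∈ s, r ≠ t → d ≤ dist r t := by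
  have h : ∀ᶠ d in 𝓝[>] (0 : ℝ), ∀ r ∈ s, ∀ t ∈ s, r ≠ t → d ≤ dist r t := by
    refine s.eventually_all.2 fun r _ => s.eventually_all.2 fun t _ => ?_
    rcases eq_or_ne r t with rfl | hrt
    · exact Eventually.of_forall fun _ h => absurd rfl h
    · exact nhdsWithin_le_nhds ((eventually_le_nhds (dist_pos.2 hrt)).mono fun _ h _ => h)
  obtain ⟨d, hsep, hd⟩ := (h.and self_mem_nhdsWithin).exists
  exact ⟨d, hd, hsep⟩

variable [MetricSpace E] [DecidableEq E] {Z : X → Finset E} {p : X} {ε : ℝ}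

theorem exists_continuousOn_branches (hcard : ∀ x, (Z x).card ≤ (Z p).card)
    (hsemicont : ∀ x₀, ∀ y₀ ∈ Z x₀, ∀ δ > 0, ∀ᶠ x in 𝓝 x₀, ∃ y ∈ Z x, dist y y₀ < δ)
    (hε : 0 < ε) (hsep : ∀ r ∈ Z p, ∀ s ∈ Z p, r ≠ s → 2 * ε ≤ dist r s) :
    ∃ U, IsOpen U ∧ p ∈ U ∧ ∃ ψ : E → X → E,
      (∀ r ∈ Z p, ContinuousOn (ψ r) U ∧ ∀ x ∈ U, dist (ψ r x) r < ε) ∧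
      ∀ x ∈ U, Z x = (Z p).image (ψ · x) ∧ (Z x).card = (Z p).card := by
  have hball {r s y : E} (hr : r ∈ Z p) (hs : s ∈ Z p) (hyr : dist y r < ε) (hys : dist y s < ε) :
      r = s := by
    by_contra hrs
    linarith [hsep r hr s hs hrs, dist_triangle_left r s y]
  obtain ⟨U, hUroots, hU, hpU⟩ := eventually_nhds_iff.1 <|
    (Z p).eventually_all.2 fun r hr => hsemicont p r hr ε hε
  choose! ψ hψZ hψr using fun r hr x hx => hUroots x hx r hr
  have hinj : ∀ x ∈ U, InjOn (ψ · x) (Z p) := fun x hx r hr s hs hrs =>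
    hball hr hs (hψr r hr x hx) (by simp only at hrs; exact hrs ▸ hψr s hs x hx)
  have himage : ∀ x ∈ U, Z x = (Z p).image (ψ · x) := fun x hx =>
    (Finset.eq_of_subset_of_card_le (Finset.image_subset_iff.2 fun r hr => hψZ r hr x hx)
      ((hcard x).trans (Finset.card_image_of_injOn (hinj x hx)).ge)).symm
  have huniq : ∀ x ∈ U, ∀ y ∈ Z x, ∀ r ∈ Z p, dist y r < ε → ψ r x = y := by
    intro x hx y hy r hr hyr
    obtain ⟨s, hs, rfl⟩ := Finset.mem_image.1 (himage x hx ▸ hy)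
    rw [hball hr hs hyr (hψr s hs x hx)]
  refine ⟨U, hU, hpU, ψ, fun r hr => ⟨fun x₁ hx₁ => ?_, hψr r hr⟩, fun x hx =>
    ⟨himage x hx, himage x hx ▸ Finset.card_image_of_injOn (hinj x hx)⟩⟩
  -- `ψ r x` is the only point of `Z x` within `ε` of `r`, and `hsemicont` at `(x₁, ψ r x₁)`
  -- supplies one close to `ψ r x₁`.
  refine (Metric.continuousAt_iff'.2 fun δ hδ => ?_).continuousWithinAt
  have hη : 0 < min δ (ε - dist (ψ r x₁) r) := lt_min hδ (sub_pos.2 (hψr r hr x₁ hx₁))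
  filter_upwards [hU.mem_nhds hx₁, hsemicont x₁ _ (hψZ r hr x₁ hx₁) _ hη]
    with x hx ⟨y, hy, hyd⟩
  have hyr : dist y r < ε := by
    linarith [min_le_right δ (ε - dist (ψ r x₁) r), dist_triangle y (ψ r x₁) r]
  rw [huniq x hx y hy r hr hyr]
  exact hyd.trans_le (min_le_left _ _)

end FiniteSetFamily

theorem exists_contractingWith_shift_mem_iff {X E : Type*} [TopologicalSpace X]
    [NormedAddCommGroup E] [NormedSpace ℝ E] [DecidableEq E] {Z : X → Finset E} {p : X}
    (hcard : ∀ x, (Z x).card ≤ (Z p).card)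
    (hsemicont : ∀ x₀, ∀ y₀ ∈ Z x₀, ∀ δ > 0, ∀ᶠ x in 𝓝 x₀, ∃ y ∈ Z x, dist y y₀ < δ) :
    ∃ U, IsOpen U ∧ p ∈ U ∧ (∀ x ∈ U, (Z x).card = (Z p).card) ∧
      ∃ g : X → E → E, ContinuousOn ↿g (U ×ˢ univ) ∧ (∀ x ∈ U, ContractingWith (1 / 2) (g x)) ∧
        ∀ x ∈ U, ∀ y, y ∈ Z x ↔ y + g x y ∈ Z p := by
  obtain ⟨d, hd, hsep⟩ := (Z p).exists_pos_forall_le_dist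
  set N : ℝ := ((Z p).card : ℝ)
  -- With `d = 4 (N + 1) ε` the moved points stay `d / 2`-apart and the total displacement `N ε`
  -- is at most `d / 4`, so the tent shift of width `d / 2` is a `1 / 2`-contraction.
  set ε := d / (4 * (N + 1))
  have hε : 0 < ε := by positivity
  have hεd : 4 * (N + 1) * ε = d := mul_div_cancel₀ d (by positivity)
  have hNε : 0 ≤ N * ε := by positivity
  obtain ⟨U, hU, hpU, ψ, hψ, hZU⟩ := exists_continuousOn_branches hcard hsemicont hε
    fun r hr s hs hrs => by linarith [hsep r hr s hs hrs]
  have hψsep : ∀ x ∈ U, ∀ r ∈ Z p, ∀ s ∈ Z p, s ≠ r → d / 2 ≤ dist (ψ r x) (ψ s x) := by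
    intro x hx r hr s hs hsr
    linarith [hsep s hs r hr hsr, dist_triangle4 s (ψ s x) (ψ r x) r, (hψ r hr).2 x hx,
      (hψ s hs).2 x hx, dist_comm s (ψ s x), dist_comm (ψ s x) (ψ r x)]
  have hg : ∀ x ∈ U, ContractingWith (1 / 2) (bumpShift (Z p) (d / 2) (ψ · x)) := fun x hx =>
    contractingWith_bumpShift (half_pos hd) (fun r hr => ((hψ r hr).2 x hx).le) (by linarith)
  refine ⟨U, hU, hpU, fun x hx => (hZU x hx).2, fun x => bumpShift (Z p) (d / 2) (ψ · x),
    continuousOn_bumpShift (w := d / 2) fun r hr => (hψ r hr).1, hg, fun x hx y => ?_⟩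
  rw [(hZU x hx).1, Finset.mem_image,
    add_bumpShift_mem_iff (ψ := (ψ · x)) (half_pos hd) (hψsep x hx) (hg x hx)]

lemma Polynomial.nodup_roots_iff_not_isRoot_derivative {R : Type*} [CommRing R] [IsDomain R]
    {q : R[X]} (hq : q ≠ 0) : q.roots.Nodup ↔ ∀ y, q.IsRoot y → ¬ q.derivative.IsRoot y := by
  classical
  simp_rw [Multiset.nodup_iff_count_le_one, count_roots, ← not_lt,
    one_lt_rootMultiplicity_iff_isRoot hq, not_and]

lemma Polynomial.exists_mem_roots_dist_lt {q : ℂ[X]} (hq : q.Monic) {r : ℂ} {ε : ℝ} (hε : 0 ≤ ε)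
    (h : ‖q.eval r‖ < ε ^ q.natDegree) : ∃ y ∈ q.roots, dist y r < ε := by
  by_contra! hfar
  refine h.not_ge ?_
  have hnorm (s : Multiset ℂ) : ‖s.prod‖ = (s.map (‖·‖)).prod := by
    simpa using map_multiset_prod (normHom : ℂ →*₀ ℝ) s
  rw [(IsAlgClosed.splits q).eval_eq_prod_roots_of_monic hq, ← IsAlgClosed.card_roots_eq_natDegree,
    ← Multiset.prod_replicate, ← Multiset.map_const', hnorm, Multiset.map_map]
  exact Multiset.prod_map_le_prod_map₀ _ _ (fun _ _ => hε) fun y hy => by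
    simpa [dist_eq_norm'] using hfar y hy

section FiberRoots

variable {f : Polynomial (Polynomial ℂ)}

noncomputable def fiberRoots (f : Polynomial (Polynomial ℂ)) (x : ℂ) : Finset ℂ :=
  (f.map (evalRingHom x)).roots.toFinset

lemma mem_fiberRoots (hf : f.Monic) {x y : ℂ} : y ∈ fiberRoots f x ↔ curveEval f x y = 0 := by
  rw [fiberRoots, Multiset.mem_toFinset, mem_roots (hf.map _).ne_zero]
  rfl

lemma card_fiberRoots_le (hf : f.Monic) (x : ℂ) : (fiberRoots f x).card ≤ f.natDegree :=
  (Multiset.toFinset_card_le _).trans ((card_roots' _).trans (hf.natDegree_map _).le)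

lemma notMem_critValues_iff_card_fiberRoots (hf : f.Monic) {x : ℂ} :
    x ∉ critValues f ↔ (fiberRoots f x).card = f.natDegree := by
  rw [fiberRoots, ← hf.natDegree_map (evalRingHom x), ← IsAlgClosed.card_roots_eq_natDegree,
    Multiset.toFinset_card_eq_card_iff_nodup,
    nodup_roots_iff_not_isRoot_derivative (hf.map _).ne_zero]
  simp [critValues, curveEvalDy, curveEval, derivative_map, IsRoot]

lemma continuous_curveEval (f : Polynomial (Polynomial ℂ)) :
    Continuous fun z : ℂ × ℂ => curveEval f z.1 z.2 := by
  simp only [curveEval, map_evalRingHom_eval]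
  induction f using Polynomial.induction_on' with
  | add p q hp hq => simp only [evalEval_add]; fun_prop
  | monomial n a => simp only [evalEval, eval_monomial, eval_mul, eval_C, eval_pow]; fun_prop

lemma eventually_exists_mem_fiberRoots_dist_lt (hf : f.Monic) {x₀ y₀ : ℂ}
    (h₀ : curveEval f x₀ y₀ = 0) {δ : ℝ} (hδ : 0 < δ) :
    ∀ᶠ x in 𝓝 x₀, ∃ y ∈ fiberRoots f x, dist y y₀ < δ := by
  have hlim : Tendsto (fun x => curveEval f x y₀) (𝓝 x₀) (𝓝 0) :=
    h₀ ▸ ((continuous_curveEval f).comp (continuous_id.prodMk continuous_const)).tendsto x₀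
  filter_upwards [hlim (Metric.ball_mem_nhds 0 (pow_pos hδ f.natDegree))] with x hx
  obtain ⟨y, hy, hyd⟩ := exists_mem_roots_dist_lt (hf.map (evalRingHom x)) hδ.le
    (by rwa [hf.natDegree_map, ← dist_zero_right])
  exact ⟨y, Multiset.mem_toFinset.2 hy, hyd⟩

end FiberRoots

theorem local_triviality_of_projection_general
    (f : Polynomial (Polynomial ℂ))
    (hmonic : f.Monic)
    (p : ℂ) (hp : p ∉ critValues f) :
    ∃ U : Set ℂ, IsOpen U ∧ p ∈ U ∧ U ∩ critValues f = ∅ ∧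
      ∃ Φ : {z : ℂ × ℂ // z.1 ∈ U ∧ curveEval f z.1 z.2 ≠ 0} ≃ₜ
            (U × {y : ℂ // curveEval f p y ≠ 0}),
        ∀ z, ((Φ z).1 : ℂ) = (z : ℂ × ℂ).1 := by
  have hcardp := (notMem_critValues_iff_card_fiberRoots hmonic).1 hp
  obtain ⟨U, hU, hpU, hcard, g, hgc, hg, hroots⟩ :=
    exists_contractingWith_shift_mem_iff (Z := fiberRoots f) (p := p)
      (fun x => hcardp ▸ card_fiberRoots_le hmonic x)
      fun _ _ hy₀ _ hδ => eventually_exists_mem_fiberRoots_dist_lt hmonic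
        ((mem_fiberRoots hmonic).1 hy₀) hδ
  refine ⟨U, hU, hpU, ?_, Homeomorph.ofFiberwiseContracting (S := fun x y => curveEval f x y ≠ 0)
    (T := fun w => curveEval f p w ≠ 0) hgc hg fun x hx y => ?_, fun _ => rfl⟩
  · exact eq_empty_iff_forall_notMem.2 fun x ⟨hx, hcrit⟩ =>
      (notMem_critValues_iff_card_fiberRoots hmonic).2 ((hcard x hx).trans hcardp) hcrit
  · simp only [ne_eq, ← mem_fiberRoots hmonic, hroots x hx y]

theorem local_triviality_of_projection
    (n : ℕ) (hn : 1 ≤ n) (f : Polynomial (Polynomial ℂ))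
    (hmonic : f.Monic) (hdeg : f.natDegree = n)
    (p : ℂ) (hp : p ∉ critValues f) :
    ∃ U : Set ℂ, IsOpen U ∧ p ∈ U ∧ U ∩ critValues f = ∅ ∧
      ∃ Φ : {z : ℂ × ℂ // z.1 ∈ U ∧ curveEval f z.1 z.2 ≠ 0} ≃ₜ
            (U × {y : ℂ // curveEval f p y ≠ 0}),
        ∀ z, ((Φ z).1 : ℂ) = (z : ℂ × ℂ).1 :=
  local_triviality_of_projection_general f hmonic p hp
end

section
/- Let n ≥ 1 and let f be a polynomial in two complex variables, viewed as an element of (ℂ[x])[y], which is monic in y of degree n. Then the map from the subspace {(x,y) ∈ ℂ × ℂ : F(x,y) = 0 ∧ x ∉ X_f} to the subspace {x ∈ ℂ : x ∉ X_f} sending (x,y) to x is a covering map. (The curve, away from the critical fibers, is a covering space of the base; this is what produces the braid of n strands over a loop in the base.) -/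
open Polynomial

/-!
Over a point `x₀` where the fibre polynomial `p x₀ = f(x₀, ·)` is squarefree, its `n`
roots can be separated by pairwise disjoint open sets `V r`. Since `‖q(y)‖ = ∏ ‖y - ρ‖` over
the roots `ρ` of a monic `q`, a small value of `p x` at a root of `p x₀` forces a root of `p x`
nearby, so for `x` near `x₀` every `V r` still contains a root of `p x`; having at most `n`
roots, `p x` then has exactly one root in each `V r`, and no others. Recording in which `V r` a
point of the curve lies trivializes the curve over that neighbourhood; the inverse,
`x ↦` the root of `p x` in `V r`, is continuous by the same root estimate.
-/

open Filter Topology Set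

namespace Polynomial

theorem Splits.exists_mem_roots_dist_lt {K : Type*} [NormedField K] {p : K[X]} (hs : p.Splits)
    (hm : p.Monic) {y : K} {ε : ℝ} (hε : 0 ≤ ε) (h : ‖p.eval y‖ < ε ^ p.natDegree) :
    ∃ r ∈ p.roots, dist y r < ε := by
  by_contra! hfar
  refine h.not_ge ?_
  calc ε ^ p.natDegree = (p.roots.map fun _ => ε).prod := by
        simp [hs.natDegree_eq_card_roots]
    _ ≤ (p.roots.map fun r => ‖y - r‖).prod :=
        Multiset.prod_map_le_prod_map₀ _ _ (fun _ _ => hε) fun r hr =>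
          (hfar r hr).trans_eq (dist_eq_norm y r)
    _ = ‖p.eval y‖ := by
        rw [hs.eval_eq_prod_roots_of_monic hm]
        exact Multiset.prod_hom' _ (normHom : K →*₀ ℝ) _

theorem continuous_evalEval {R : Type*} [CommSemiring R] [TopologicalSpace R]
    [IsTopologicalSemiring R] (p : R[X][X]) : Continuous fun z : R × R => p.evalEval z.1 z.2 := by
  simp only [evalEval, eval_eq_sum_range (p := p), eval_finsetSum, eval_mul, eval_pow, eval_C]
  fun_prop

theorem nodup_roots_of_forall_not_isRoot_derivative {K : Type*} [Field K] {p : K[X]}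
    (hp : p ≠ 0) (h : ∀ y, p.IsRoot y → ¬(derivative p).IsRoot y) : p.roots.Nodup := by
  classical
  refine Multiset.nodup_iff_count_le_one.mpr fun y => ?_
  rw [count_roots]
  by_contra! hy
  obtain ⟨hroot, hroot'⟩ := (one_lt_rootMultiplicity_iff_isRoot hp).mp hy
  exact h y hroot hroot'

/-- A root of `q` in `W`; a junk value when `q` has no root there. -/
noncomputable def rootIn {K : Type*} [Field K] (q : K[X]) (W : Set K) : K :=
  Classical.epsilon fun y => y ∈ W ∧ q.IsRoot y

theorem rootIn_spec {K : Type*} [Field K] {q : K[X]} {W : Set K} (h : ∃ y ∈ W, q.IsRoot y) :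
    q.rootIn W ∈ W ∧ q.IsRoot (q.rootIn W) :=
  Classical.epsilon_spec (p := fun y => y ∈ W ∧ q.IsRoot y) (by simpa using h)

section Counting

variable {K : Type*} [Field K] {q : K[X]} {V : K → Set K} {R : Finset K}

theorem exists_surjOn_roots_of_forall_exists_isRoot (hq : q ≠ 0)
    (hV : (R : Set K).PairwiseDisjoint V) (hR : q.natDegree ≤ R.card)
    (h : ∀ r ∈ R, ∃ y ∈ V r, q.IsRoot y) :
    ∃ g : K → K, (∀ r ∈ R, g r ∈ V r ∧ q.IsRoot (g r)) ∧ SurjOn g R {y | q.IsRoot y} := by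
  classical
  choose! g hgV hg using h
  have hroots : (q.roots.toFinset : Set K) = {y | q.IsRoot y} := by ext; simp [mem_roots hq]
  have hinj : InjOn g R := fun r₁ h₁ r₂ h₂ he =>
    hV.elim_set h₁ h₂ (g r₁) (hgV r₁ h₁) (he ▸ hgV r₂ h₂)
  have hcard : q.roots.toFinset.card ≤ R.card :=
    (Multiset.toFinset_card_le _).trans ((card_roots' _).trans hR)
  refine ⟨g, fun r hr => ⟨hgV r hr, hg r hr⟩, ?_⟩
  exact hroots ▸ Finset.surjOn_of_injOn_of_card_le g (hroots ▸ hg) hinj hcard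

theorem exists_mem_of_isRoot_of_forall_exists_isRoot (hq : q ≠ 0)
    (hV : (R : Set K).PairwiseDisjoint V) (hR : q.natDegree ≤ R.card)
    (h : ∀ r ∈ R, ∃ y ∈ V r, q.IsRoot y) {y : K} (hy : q.IsRoot y) : ∃ r ∈ R, y ∈ V r := by
  obtain ⟨g, hg, hsurj⟩ := exists_surjOn_roots_of_forall_exists_isRoot hq hV hR h
  obtain ⟨r, hr, rfl⟩ := hsurj hy
  exact ⟨r, hr, (hg r hr).1⟩

theorem eq_of_isRoot_of_forall_exists_isRoot (hq : q ≠ 0) (hV : (R : Set K).PairwiseDisjoint V)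
    (hR : q.natDegree ≤ R.card) (h : ∀ r ∈ R, ∃ y ∈ V r, q.IsRoot y) {r : K} (hr : r ∈ R)
    {y y' : K} (hyV : y ∈ V r) (hy : q.IsRoot y) (hyV' : y' ∈ V r) (hy' : q.IsRoot y') :
    y = y' := by
  obtain ⟨g, hg, hsurj⟩ := exists_surjOn_roots_of_forall_exists_isRoot hq hV hR h
  have hgr : ∀ {z}, z ∈ V r → q.IsRoot z → z = g r := fun hzV hz => by
    obtain ⟨s, hs, rfl⟩ := hsurj hz
    rw [hV.elim_set hs hr _ (hg s hs).1 hzV]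
  rw [hgr hyV hy, hgr hyV' hy']

end Counting

section Family

variable {X K : Type*} [TopologicalSpace X] [NormedField K] {p : X → K[X]} {n : ℕ}
  {V : K → Set K} {R : Finset K}

def rootLocus (p : X → K[X]) : Set (X × K) := {z | (p z.1).IsRoot z.2}

def rootInEach (p : X → K[X]) (V : K → Set K) (R : Finset K) : Set X :=
  {x | ∀ r ∈ R, ∃ y ∈ V r, (p x).IsRoot y}

variable [IsAlgClosed K]

theorem eventually_exists_isRoot_mem (hcont : Continuous fun z : X × K => (p z.1).eval z.2)
    (hmonic : ∀ x, (p x).Monic) (hdeg : ∀ x, (p x).natDegree = n) {x : X} {y : K}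
    (hy : (p x).IsRoot y) {W : Set K} (hW : W ∈ 𝓝 y) :
    ∀ᶠ x' in 𝓝 x, ∃ y' ∈ W, (p x').IsRoot y' := by
  obtain ⟨δ, hδ, hball⟩ := Metric.mem_nhds_iff.mp hW
  have hsmall : ∀ᶠ x' in 𝓝 x, ‖(p x').eval y‖ < δ ^ n := by
    have hc : Continuous fun x' => ‖(p x').eval y‖ := (hcont.comp (.prodMk_left y)).norm
    exact hc.continuousAt.eventually_lt continuousAt_const
      (by simpa [hy.eq_zero] using pow_pos hδ n)
  filter_upwards [hsmall] with x' hx'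
  obtain ⟨y', hy', hyy'⟩ :=
    (IsAlgClosed.splits (p x')).exists_mem_roots_dist_lt (hmonic x') hδ.le (by rwa [hdeg])
  exact ⟨y', hball (Metric.mem_ball'.mpr hyy'), isRoot_of_mem_roots hy'⟩

theorem isOpen_rootInEach (hcont : Continuous fun z : X × K => (p z.1).eval z.2)
    (hmonic : ∀ x, (p x).Monic) (hdeg : ∀ x, (p x).natDegree = n) (hVo : ∀ r, IsOpen (V r)) :
    IsOpen (rootInEach p V R) := by
  refine isOpen_iff_mem_nhds.mpr fun x hx => (eventually_all_finset R).mpr fun r hr => ?_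
  obtain ⟨y, hyV, hy⟩ := hx r hr
  exact eventually_exists_isRoot_mem hcont hmonic hdeg hy ((hVo r).mem_nhds hyV)

theorem continuousOn_rootIn (hcont : Continuous fun z : X × K => (p z.1).eval z.2)
    (hmonic : ∀ x, (p x).Monic) (hdeg : ∀ x, (p x).natDegree = n) (hVo : ∀ r, IsOpen (V r))
    (hV : (R : Set K).PairwiseDisjoint V) (hR : n ≤ R.card) {r : K} (hr : r ∈ R) :
    ContinuousOn (fun x => (p x).rootIn (V r)) (rootInEach p V R) := by
  intro x hx
  refine ContinuousAt.continuousWithinAt fun W hW => Filter.mem_map.mpr ?_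
  obtain ⟨hyV, hy⟩ := rootIn_spec (hx r hr)
  filter_upwards [(isOpen_rootInEach hcont hmonic hdeg hVo).mem_nhds hx,
    eventually_exists_isRoot_mem hcont hmonic hdeg hy (inter_mem hW ((hVo r).mem_nhds hyV))]
    with x' hx' ⟨y', ⟨hy'W, hy'V⟩, hy'⟩
  obtain ⟨hzV, hz⟩ := rootIn_spec (hx' r hr)
  rwa [mem_preimage, eq_of_isRoot_of_forall_exists_isRoot (hmonic x').ne_zero hV
    ((hdeg x').trans_le hR) hx' hr hzV hz hy'V hy']

theorem isEvenlyCovered_of_mem_rootInEach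
    (hcont : Continuous fun z : X × K => (p z.1).eval z.2) (hmonic : ∀ x, (p x).Monic)
    (hdeg : ∀ x, (p x).natDegree = n) (hVo : ∀ r, IsOpen (V r))
    (hV : (R : Set K).PairwiseDisjoint V) (hR : n ≤ R.card) {x₀ : X}
    (hx₀ : x₀ ∈ rootInEach p V R) :
    IsEvenlyCovered (fun z : rootLocus p => z.1.1) x₀ R := by
  set U := rootInEach p V R
  have hU : IsOpen U := isOpen_rootInEach hcont hmonic hdeg hVo
  have hcard : ∀ x, (p x).natDegree ≤ R.card := fun x => (hdeg x).trans_le hR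
  have hsheet : ∀ z : (fun z : rootLocus p => z.1.1) ⁻¹' U, ∃ r : R, z.1.1.2 ∈ V r := fun z =>
    have ⟨r, hr, hz⟩ := exists_mem_of_isRoot_of_forall_exists_isRoot (hmonic _).ne_zero hV
      (hcard _) z.2 z.1.2
    ⟨⟨r, hr⟩, hz⟩
  choose sheet hsheet using hsheet
  have sheet_eq : ∀ z (r : R), z.1.1.2 ∈ V r → sheet z = r := fun z r hz =>
    Subtype.ext (hV.elim_set (sheet z).2 r.2 _ (hsheet z) hz)
  let H : (fun z : rootLocus p => z.1.1) ⁻¹' U ≃ₜ U × R :=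
    { toFun z := (⟨z.1.1.1, z.2⟩, sheet z)
      invFun xr := ⟨⟨(xr.1.1, (p xr.1.1).rootIn (V xr.2)), (rootIn_spec (xr.1.2 _ xr.2.2)).2⟩,
        xr.1.2⟩
      left_inv z := by
        obtain ⟨hmem, hroot⟩ := rootIn_spec (z.2 _ (sheet z).2)
        exact Subtype.ext <| Subtype.ext <| Prod.ext rfl <| eq_of_isRoot_of_forall_exists_isRoot
          (hmonic _).ne_zero hV (hcard _) z.2 (sheet z).2 hmem hroot (hsheet z) z.1.2
      right_inv xr := Prod.ext rfl (sheet_eq _ _ (rootIn_spec (xr.1.2 _ xr.2.2)).1)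
      continuous_toFun := by
        refine .prodMk (by fun_prop) (continuous_discrete_rng.mpr fun r => ?_)
        have : sheet ⁻¹' {r} = {z | z.1.1.2 ∈ V r} :=
          Set.ext fun z => ⟨fun h => h ▸ hsheet z, sheet_eq z r⟩
        exact this ▸ (hVo r).preimage (by fun_prop)
      continuous_invFun := by
        refine .subtype_mk (.subtype_mk (.prodMk (by fun_prop) ?_) _) _
        exact continuous_prod_of_discrete_right.mpr fun r =>
          continuousOn_iff_continuous_domRestrict.mp
            (continuousOn_rootIn hcont hmonic hdeg hVo hV hR r.2) }
  exact ⟨inferInstance, U, hx₀, hU, hU.preimage (by fun_prop), H, fun _ => rfl⟩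

theorem isCoveringMapOn_rootLocus (hcont : Continuous fun z : X × K => (p z.1).eval z.2)
    (hmonic : ∀ x, (p x).Monic) (hdeg : ∀ x, (p x).natDegree = n) :
    IsCoveringMapOn (fun z : rootLocus p => z.1.1) {x | (p x).roots.Nodup} := by
  classical
  intro x₀ hx₀
  set R := (p x₀).roots.toFinset
  have hR : R.card = n := by
    rw [Multiset.toFinset_card_of_nodup hx₀, ← (IsAlgClosed.splits _).natDegree_eq_card_roots,
      hdeg]
  obtain ⟨V, hVx, hV⟩ := R.finite_toSet.t2_separation
  have hx₀U : x₀ ∈ rootInEach p V R := fun r hr =>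
    ⟨r, (hVx r).1, isRoot_of_mem_roots (Multiset.mem_toFinset.mp hr)⟩
  exact (isEvenlyCovered_of_mem_rootInEach hcont hmonic hdeg (fun r => (hVx r).2) hV hR.ge
    hx₀U).to_isEvenlyCovered_preimage

end Family

end Polynomial

theorem nodup_roots_of_notMem_critValues {f : ℂ[X][X]} (hmonic : f.Monic) {x : ℂ}
    (hx : x ∉ critValues f) : (f.map (evalRingHom x)).roots.Nodup :=
  nodup_roots_of_forall_not_isRoot_derivative (hmonic.map _).ne_zero fun y hy hy' =>
    hx ⟨y, hy, by rwa [curveEvalDy, curveEval, ← derivative_map]⟩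

theorem curve_is_covering_away_from_critical_fibers_general
    (f : Polynomial (Polynomial ℂ))
    (hmonic : f.Monic) :
    IsCoveringMap
      (fun z : {z : ℂ × ℂ // curveEval f z.1 z.2 = 0 ∧ z.1 ∉ critValues f} =>
        (⟨(z : ℂ × ℂ).1, z.2.2⟩ : {x : ℂ // x ∉ critValues f})) := by
  let p : ℂ → ℂ[X] := fun x => f.map (evalRingHom x)
  have hcont : Continuous fun z : ℂ × ℂ => (p z.1).eval z.2 := by
    simpa only [p, map_evalRingHom_eval] using continuous_evalEval f
  have hcov : IsCoveringMapOn (fun z : rootLocus p => z.1.1) (critValues f)ᶜ :=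
    (isCoveringMapOn_rootLocus hcont (fun _ => hmonic.map _)
      fun _ => hmonic.natDegree_map _).mono fun _ => nodup_roots_of_notMem_critValues hmonic
  let e : {z : ℂ × ℂ // curveEval f z.1 z.2 = 0 ∧ z.1 ∉ critValues f} ≃ₜ
      (fun z : rootLocus p => z.1.1) ⁻¹' (critValues f)ᶜ :=
    { toFun z := ⟨⟨z.1, z.2.1⟩, z.2.2⟩
      invFun w := ⟨w.1.1, w.1.2, w.2⟩
      left_inv _ := rfl
      right_inv _ := rfl
      continuous_toFun := by fun_prop
      continuous_invFun := by fun_prop }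
  exact hcov.isCoveringMap_restrictPreimage.comp_homeomorph e

theorem curve_is_covering_away_from_critical_fibers
    (n : ℕ) (hn : 1 ≤ n) (f : Polynomial (Polynomial ℂ))
    (hmonic : f.Monic) (hdeg : f.natDegree = n) :
    IsCoveringMap
      (fun z : {z : ℂ × ℂ // curveEval f z.1 z.2 = 0 ∧ z.1 ∉ critValues f} =>
        (⟨(z : ℂ × ℂ).1, z.2.2⟩ : {x : ℂ // x ∉ critValues f})) :=
  curve_is_covering_away_from_critical_fibers_general f hmonic
end

section
/- Let η and R be real numbers with 0 < η < R². Then the subset {(x,y,v) ∈ ℝ³ : -η ≤ x² - y² - v² ≤ η and x² + y² + v² ≤ R²} of ℝ³ is homeomorphic to the closed unit ball in ℝ³. (The region N₂′ between the two hyperboloids, within a large ball, is a 3-ball; this is the intermediate claim in the proof that N₂ is a 4-ball.) -/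
/-!
With `f = x² - y² - v²`, the function `g p = max √(|f p| / η) (‖p‖ / |R|)` is continuous,
positively homogeneous of degree one and at least `‖p‖ / |R|`, and the region is `{g ≤ 1}`.
Rescaling each ray from the origin by the factor `g p / ‖p‖` is then a self-homeomorphism of the
space carrying `g` to the norm, hence `{g ≤ 1}` onto the closed unit ball.
-/

open Metric Set Filter Topology

section RadialRescale

variable {E : Type*} [NormedAddCommGroup E] [NormedSpace ℝ E]

theorem continuous_smul_self_of_continuousAt {a : E → ℝ} (ha : ∀ p ≠ 0, ContinuousAt a p)
    (h0 : Tendsto (fun p => a p • p) (𝓝 0) (𝓝 0)) : Continuous fun p => a p • p := by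
  refine continuous_iff_continuousAt.2 fun p => ?_
  rcases eq_or_ne p 0 with rfl | hp
  · simpa [ContinuousAt] using h0
  · exact (ha p hp).smul continuousAt_id

theorem norm_div_norm_smul_self {a : ℝ} {p : E} (h : p = 0 → a = 0) :
    ‖(a / ‖p‖) • p‖ = |a| := by
  rw [norm_smul, Real.norm_eq_abs, abs_div, abs_norm]
  exact div_mul_cancel_of_imp fun hp => by simp [h (norm_eq_zero.1 hp)]

theorem continuous_div_norm_smul_self {g : E → ℝ} (hg : Continuous g) (hg0 : g 0 = 0) :
    Continuous fun p => (g p / ‖p‖) • p := by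
  refine continuous_smul_self_of_continuousAt
    (fun p hp => hg.continuousAt.div continuous_norm.continuousAt (norm_ne_zero_iff.2 hp)) ?_
  have habs : Tendsto (fun p => |g p|) (𝓝 0) (𝓝 0) := by simpa [hg0] using hg.abs.tendsto 0
  refine tendsto_zero_iff_norm_tendsto_zero.2 (habs.congr fun p => ?_)
  exact (norm_div_norm_smul_self fun hp => hp ▸ hg0).symm

theorem continuous_norm_div_smul_self {g : E → ℝ} (hg : Continuous g)
    (hpos : ∀ q ≠ 0, 0 < g q) {K : ℝ} (hlb : ∀ q, ‖q‖ ≤ K * g q) :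
    Continuous fun q => (‖q‖ / g q) • q := by
  refine continuous_smul_self_of_continuousAt
    (fun q hq => continuous_norm.continuousAt.div hg.continuousAt (hpos q hq).ne') ?_
  have hK0 : Tendsto (fun q : E => K * ‖q‖) (𝓝 0) (𝓝 0) :=
    (continuous_const.mul continuous_norm).tendsto' 0 0 (by simp)
  refine squeeze_zero_norm (fun q => ?_) hK0
  rcases eq_or_ne q 0 with rfl | hq
  · simp
  rw [norm_smul, Real.norm_of_nonneg (div_nonneg (norm_nonneg q) (hpos q hq).le)]
  exact mul_le_mul_of_nonneg_right ((div_le_iff₀ (hpos q hq)).2 (hlb q)) (norm_nonneg q)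

theorem exists_homeomorph_norm_eq {g : E → ℝ} (hg : Continuous g)
    (hhom : ∀ c : ℝ, 0 ≤ c → ∀ p, g (c • p) = c * g p)
    {K : ℝ} (hK : 0 < K) (hlb : ∀ p, ‖p‖ ≤ K * g p) :
    ∃ h : E ≃ₜ E, ∀ p, ‖h p‖ = g p := by
  have hg0 : g 0 = 0 := by simpa using hhom 0 le_rfl 0
  have hg_nonneg : ∀ p, 0 ≤ g p := fun p =>
    nonneg_of_mul_nonneg_right ((norm_nonneg p).trans (hlb p)) hK
  have hg_pos : ∀ p, p ≠ 0 → 0 < g p := fun p hp =>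
    pos_of_mul_pos_right ((norm_pos_iff.2 hp).trans_le (hlb p)) hK.le
  set F : E → E := fun p => (g p / ‖p‖) • p
  set G : E → E := fun q => (‖q‖ / g q) • q
  have hnorm_F : ∀ p, ‖F p‖ = g p := fun p => by
    rw [norm_div_norm_smul_self fun hp => hp ▸ hg0, abs_of_nonneg (hg_nonneg p)]
  have hnorm_G : ∀ q, ‖G q‖ = ‖q‖ / g q * ‖q‖ := fun q => by
    rw [norm_smul, Real.norm_of_nonneg (div_nonneg (norm_nonneg q) (hg_nonneg q))]
  have hg_G : ∀ q, g (G q) = ‖q‖ := fun q => by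
    rw [hhom _ (div_nonneg (norm_nonneg q) (hg_nonneg q))]
    refine div_mul_cancel_of_imp fun hq => ?_
    simpa [hq] using hlb q
  have hGF : ∀ p, G (F p) = p := by
    intro p
    rcases eq_or_ne p 0 with rfl | hp
    · simp [F, G]
    have hgp := (hg_pos p hp).ne'
    have hnp := norm_ne_zero_iff.2 hp
    simp only [G, hnorm_F, F, hhom _ (div_nonneg (hg_nonneg p) (norm_nonneg p)), smul_smul]
    rw [show g p / (g p / ‖p‖ * g p) * (g p / ‖p‖) = 1 by field_simp, one_smul]
  have hFG : ∀ q, F (G q) = q := by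
    intro q
    rcases eq_or_ne q 0 with rfl | hq
    · simp [F, G]
    have hgq := (hg_pos q hq).ne'
    have hnq := norm_ne_zero_iff.2 hq
    simp only [F, hg_G, hnorm_G, G, smul_smul]
    rw [show ‖q‖ / (‖q‖ / g q * ‖q‖) * (‖q‖ / g q) = 1 by field_simp, one_smul]
  exact ⟨⟨⟨F, G, hGF, hFG⟩, continuous_div_norm_smul_self hg hg0,
    continuous_norm_div_smul_self hg hg_pos hlb⟩, hnorm_F⟩

theorem nonempty_homeomorph_sublevel_closedBall {g : E → ℝ} (hg : Continuous g)
    (hhom : ∀ c : ℝ, 0 ≤ c → ∀ p, g (c • p) = c * g p)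
    {K : ℝ} (hK : 0 < K) (hlb : ∀ p, ‖p‖ ≤ K * g p) :
    Nonempty ({p | g p ≤ 1} ≃ₜ closedBall (0 : E) 1) := by
  obtain ⟨h, hh⟩ := exists_homeomorph_norm_eq hg hhom hK hlb
  exact ⟨h.subtype fun p => by simp [hh]⟩

theorem nonempty_homeomorph_closedBall_of_sq_homogeneous {f : E → ℝ} (hf : Continuous f)
    (hhom : ∀ (c : ℝ) p, f (c • p) = c ^ 2 * f p) {η r : ℝ} (hη : 0 < η) (hr : 0 < r) :
    Nonempty ({p | |f p| ≤ η ∧ ‖p‖ ≤ r} ≃ₜ closedBall (0 : E) 1) := by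
  set g : E → ℝ := fun p => max √(|f p| / η) (‖p‖ / r)
  have hsub : {p | |f p| ≤ η ∧ ‖p‖ ≤ r} = {p | g p ≤ 1} := by
    ext p
    simp only [mem_ofPred_eq, g, max_le_iff, Real.sqrt_le_one, div_le_one hη, div_le_one hr]
  have hg : Continuous g := by fun_prop
  have hghom : ∀ c : ℝ, 0 ≤ c → ∀ p, g (c • p) = c * g p := by
    intro c hc p
    simp only [g, hhom, norm_smul, Real.norm_of_nonneg hc, abs_mul, abs_of_nonneg (sq_nonneg c),
      mul_div_assoc, Real.sqrt_mul (sq_nonneg c), Real.sqrt_sq hc]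
    exact (mul_max_of_nonneg _ _ hc).symm
  have hlb : ∀ p, ‖p‖ ≤ r * g p := fun p => by
    rw [← div_le_iff₀' hr]
    exact le_max_right _ _
  obtain ⟨h⟩ := nonempty_homeomorph_sublevel_closedBall hg hghom hr hlb
  exact ⟨(Homeomorph.setCongr hsub).trans h⟩

end RadialRescale

theorem region_between_hyperboloids_is_three_ball
    (η R : ℝ) (hη : 0 < η) (hηR : η < R ^ 2) :
    Nonempty
      (({p : EuclideanSpace ℝ (Fin 3) |
            -η ≤ p 0 ^ 2 - p 1 ^ 2 - p 2 ^ 2 ∧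
            p 0 ^ 2 - p 1 ^ 2 - p 2 ^ 2 ≤ η ∧
            p 0 ^ 2 + p 1 ^ 2 + p 2 ^ 2 ≤ R ^ 2} : Set (EuclideanSpace ℝ (Fin 3))) ≃ₜ
        (Metric.closedBall (0 : EuclideanSpace ℝ (Fin 3)) 1 :
          Set (EuclideanSpace ℝ (Fin 3)))) := by
  set f : EuclideanSpace ℝ (Fin 3) → ℝ := fun p => p 0 ^ 2 - p 1 ^ 2 - p 2 ^ 2
  have hR : 0 < |R| := abs_pos.2 (by rintro rfl; linarith)
  have hregion : {p : EuclideanSpace ℝ (Fin 3) |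
      -η ≤ p 0 ^ 2 - p 1 ^ 2 - p 2 ^ 2 ∧ p 0 ^ 2 - p 1 ^ 2 - p 2 ^ 2 ≤ η ∧
      p 0 ^ 2 + p 1 ^ 2 + p 2 ^ 2 ≤ R ^ 2} = {p | |f p| ≤ η ∧ ‖p‖ ≤ |R|} := by
    ext p
    simp only [mem_ofPred_eq]
    rw [← abs_norm, ← sq_le_sq, EuclideanSpace.real_norm_sq_eq, Fin.sum_univ_three, abs_le,
      and_assoc]
  have hf_hom : ∀ (c : ℝ) p, f (c • p) = c ^ 2 * f p := fun c p => by
    simp only [f, PiLp.smul_apply, smul_eq_mul]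
    ring
  obtain ⟨h⟩ := nonempty_homeomorph_closedBall_of_sq_homogeneous (by fun_prop) hf_hom hη hR
  exact ⟨(Homeomorph.setCongr hregion).trans h⟩
end

section
/- Let η and R be real numbers with 0 < η < R². Then the subset N₂ = {(x,y,r,v) ∈ ℝ⁴ : -η ≤ x² - y² - v² ≤ r ≤ η and x² + y² + v² ≤ R²} of ℝ⁴ is homeomorphic to the closed unit ball in ℝ⁴. (The piece N₂ attached near an indefinite fold of the boundary map is a 4-ball, so attaching it is attaching a 2-handle; this is the Proposition 'N₂ is diffeomorphic to a 4-ball', in topological form and with the implicit bound near the critical point made explicit.) -/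
/-!
In the coordinates `u = x² + y² + v²`, `w = x² - y² - v²` and `r`, the set `N₂` is cut out by four
inequalities that are linear in `(u, w, r)`, and the cylinder `{u ≤ R², 0 ≤ r ≤ η}` by three.
Scaling `(x, y, v)` by `√t` and `r - η / 2` by `t` multiplies `u`, `w` and `r - η / 2` by `t`,
so both sets are unit sublevel sets of gauges that are homogeneous of degree one for this single
dilation. Moving every point along its orbit until the second gauge takes the value of the first
is a homeomorphism of `ℝ⁴` carrying `N₂` onto the cylinder, which is a compact convex body with
nonempty interior and hence a closed 4-ball.
-/

open Set Filter Topology Function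

noncomputable section

section Dilation

variable {X : Type*} [TopologicalSpace X]

structure IsDilation (δ : ℝ → X → X) (c : X) : Prop where
  continuous : Continuous (uncurry δ)
  zero_apply : ∀ z, δ 0 z = c
  one_apply : ∀ z, δ 1 z = z
  mul_apply : ∀ {s t : ℝ}, 0 ≤ s → 0 ≤ t → ∀ z, δ s (δ t z) = δ (s * t) z

structure IsHomogeneousGauge (δ : ℝ → X → X) (c : X) (g : X → ℝ) : Prop where
  continuous : Continuous g
  nonneg : ∀ z, 0 ≤ g z
  eq_center : ∀ z, g z = 0 → z = c
  map_dilation : ∀ {t : ℝ}, 0 ≤ t → ∀ z, g (δ t z) = t * g z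

variable {δ : ℝ → X → X} {c : X} {g h : X → ℝ}

theorem IsDilation.apply_center (hδ : IsDilation δ c) {t : ℝ} (ht : 0 ≤ t) : δ t c = c := by
  rw [← hδ.zero_apply c, hδ.mul_apply ht le_rfl, mul_zero]

theorem IsHomogeneousGauge.apply_center (hg : IsHomogeneousGauge δ c g) (hδ : IsDilation δ c) :
    g c = 0 := by
  rw [← hδ.zero_apply c, hg.map_dilation le_rfl, zero_mul]

theorem IsHomogeneousGauge.pos (hg : IsHomogeneousGauge δ c g) {z : X} (hz : z ≠ c) : 0 < g z :=
  (hg.nonneg z).lt_of_ne' fun h ↦ hz (hg.eq_center z h)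

theorem IsHomogeneousGauge.center_mem_interior (hg : IsHomogeneousGauge δ c g)
    (hδ : IsDilation δ c) : c ∈ interior {z | g z ≤ 1} :=
  mem_interior_iff_mem_nhds.2 <| mem_of_superset
    ((isOpen_lt hg.continuous continuous_const).mem_nhds
      (show g c < 1 by simp [hg.apply_center hδ]))
    fun _ ↦ le_of_lt (α := ℝ)

def rescale (δ : ℝ → X → X) (g h : X → ℝ) (z : X) : X := δ (g z / h z) z

theorem rescale_center (hδ : IsDilation δ c) (hg : IsHomogeneousGauge δ c g) :
    rescale δ g h c = c := by
  rw [rescale, hg.apply_center hδ, zero_div, hδ.zero_apply]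

theorem apply_rescale (hδ : IsDilation δ c) (hg : IsHomogeneousGauge δ c g)
    (hh : IsHomogeneousGauge δ c h) (z : X) : h (rescale δ g h z) = g z := by
  rcases eq_or_ne z c with rfl | hz
  · rw [rescale_center hδ hg, hg.apply_center hδ, hh.apply_center hδ]
  · rw [rescale, hh.map_dilation (div_nonneg (hg.nonneg z) (hh.nonneg z)),
      div_mul_cancel₀ _ (hh.pos hz).ne']

theorem rescale_rescale (hδ : IsDilation δ c) (hg : IsHomogeneousGauge δ c g)
    (hh : IsHomogeneousGauge δ c h) (z : X) : rescale δ h g (rescale δ g h z) = z := by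
  rcases eq_or_ne z c with rfl | hz
  · rw [rescale_center hδ hg, rescale_center hδ hh]
  · have hgz := hg.pos hz
    have hhz := hh.pos hz
    have hr : 0 ≤ g z / h z := by positivity
    rw [rescale, apply_rescale hδ hg hh, rescale, hg.map_dilation hr,
      hδ.mul_apply (by positivity) hr,
      show g z / (g z / h z * g z) * (g z / h z) = 1 by field_simp, hδ.one_apply]

theorem continuous_rescale (hδ : IsDilation δ c) (hg : IsHomogeneousGauge δ c g)
    (hh : IsHomogeneousGauge δ c h) {C : ℝ} (hgh : ∀ z, g z ≤ C * h z) :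
    Continuous (rescale δ g h) := by
  refine continuous_iff_continuousAt.2 fun z₀ ↦ ?_
  rcases eq_or_ne z₀ c with rfl | hz₀
  · -- the ratio `g / h` stays in `[0, C]`, so a tube lemma over this compact interval applies
    rw [ContinuousAt, rescale_center hδ hg]
    intro V hV
    rw [Filter.mem_map]
    have hδV : ∀ t ∈ Icc 0 C, ∀ᶠ p : X × ℝ in 𝓝 (z₀, t), δ p.2 p.1 ∈ V := fun t ht ↦
      (hδ.continuous.comp continuous_swap).continuousAt.preimage_mem_nhds
        (by simpa [hδ.apply_center ht.1] using hV)
    filter_upwards [isCompact_Icc.eventually_forall_of_forall_eventually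
      (P := fun z t ↦ δ t z ∈ V) hδV] with z hz
    rcases eq_or_ne z z₀ with rfl | hzc
    · rw [mem_preimage, rescale_center hδ hg]
      exact mem_of_mem_nhds hV
    · have hhz := hh.pos hzc
      exact hz _ ⟨div_nonneg (hg.nonneg z) hhz.le, (div_le_iff₀ hhz).2 (hgh z)⟩
  · exact hδ.continuous.continuousAt.comp (f := fun z ↦ (g z / h z, z))
      ((hg.continuous.continuousAt.div hh.continuous.continuousAt (hh.pos hz₀).ne').prodMk
        continuousAt_id)

theorem nonempty_homeomorph_sublevel (hδ : IsDilation δ c) (hg : IsHomogeneousGauge δ c g)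
    (hh : IsHomogeneousGauge δ c h) {C C' : ℝ} (hgh : ∀ z, g z ≤ C * h z)
    (hhg : ∀ z, h z ≤ C' * g z) : Nonempty ({z | g z ≤ 1} ≃ₜ {z | h z ≤ 1}) :=
  let e : X ≃ₜ X :=
    { toFun := rescale δ g h
      invFun := rescale δ h g
      left_inv := rescale_rescale hδ hg hh
      right_inv := rescale_rescale hδ hh hg
      continuous_toFun := continuous_rescale hδ hg hh hgh
      continuous_invFun := continuous_rescale hδ hh hg hhg }
  ⟨e.subtype fun z ↦ by simp [e, apply_rescale hδ hg hh]⟩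

end Dilation

local notation "ℝ⁴" => EuclideanSpace ℝ (Fin 4)

section FourBall

def foldDilation (η t : ℝ) (z : ℝ⁴) : ℝ⁴ :=
  !₂[√t * z 0, √t * z 1, η / 2 + t * (z 2 - η / 2), √t * z 3]

def posForm (z : ℝ⁴) : ℝ := z 0 ^ 2 + z 1 ^ 2 + z 3 ^ 2

def indefForm (z : ℝ⁴) : ℝ := z 0 ^ 2 - z 1 ^ 2 - z 3 ^ 2

variable {η R t : ℝ}

theorem isDilation_foldDilation (η : ℝ) : IsDilation (foldDilation η) !₂[0, 0, η / 2, 0] where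
  continuous := by
    unfold foldDilation
    fun_prop
  zero_apply z := by ext i; fin_cases i <;> simp [foldDilation]
  one_apply z := by ext i; fin_cases i <;> simp [foldDilation]
  mul_apply hs ht z := by
    ext i; fin_cases i <;> simp [foldDilation, Real.sqrt_mul hs] <;> ring

theorem posForm_foldDilation (ht : 0 ≤ t) (z : ℝ⁴) :
    posForm (foldDilation η t z) = t * posForm z := by
  simp [posForm, foldDilation, mul_pow, Real.sq_sqrt ht]; ring

theorem indefForm_foldDilation (ht : 0 ≤ t) (z : ℝ⁴) :
    indefForm (foldDilation η t z) = t * indefForm z := by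
  simp [indefForm, foldDilation, mul_pow, Real.sq_sqrt ht]; ring

theorem foldDilation_apply_two_sub (z : ℝ⁴) :
    foldDilation η t z 2 - η / 2 = t * (z 2 - η / 2) := by
  simp [foldDilation]


theorem posForm_nonneg (z : ℝ⁴) : 0 ≤ posForm z := by unfold posForm; positivity

theorem abs_indefForm_le (z : ℝ⁴) : |indefForm z| ≤ posForm z := by
  rw [abs_le]
  unfold posForm indefForm
  constructor <;> nlinarith [sq_nonneg (z 0), sq_nonneg (z 1), sq_nonneg (z 3)]

theorem eq_of_posForm_eq_zero {z : ℝ⁴} (hP : posForm z = 0) (h2 : z 2 = η / 2) :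
    z = !₂[0, 0, η / 2, 0] := by
  unfold posForm at hP
  have h0 : z 0 = 0 := by nlinarith [sq_nonneg (z 0), sq_nonneg (z 1), sq_nonneg (z 3)]
  have h1 : z 1 = 0 := by nlinarith [sq_nonneg (z 0), sq_nonneg (z 1), sq_nonneg (z 3)]
  have h3 : z 3 = 0 := by nlinarith [sq_nonneg (z 0), sq_nonneg (z 1), sq_nonneg (z 3)]
  ext i; fin_cases i <;> simp [h0, h1, h2, h3]

/-- `N₂` is cut out by four inequalities that are linear in `(posForm, indefForm, r)`;
this is the gauge of that polyhedron about `posForm = indefForm = 0, r = η / 2`. -/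
def n2Gauge (η R : ℝ) (z : ℝ⁴) : ℝ :=
  max (posForm z / R ^ 2) (max (-indefForm z / η)
    (max ((z 2 - η / 2) / (η / 2)) ((indefForm z - (z 2 - η / 2)) / (η / 2))))

def cylGauge (η R : ℝ) (z : ℝ⁴) : ℝ := max (posForm z / R ^ 2) (|z 2 - η / 2| / (η / 2))

theorem isHomogeneousGauge_n2Gauge (hη : 0 < η) (hR : 0 < R ^ 2) :
    IsHomogeneousGauge (foldDilation η) !₂[0, 0, η / 2, 0] (n2Gauge η R) where
  continuous := by unfold n2Gauge posForm indefForm; fun_prop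
  nonneg z := le_max_of_le_left (div_nonneg (posForm_nonneg z) hR.le)
  eq_center z hz := by
    have hle : n2Gauge η R z ≤ 0 := hz.le
    simp only [n2Gauge, max_le_iff] at hle
    obtain ⟨hP, -, hM, hIM⟩ := hle
    have hη2 : 0 < η / 2 := by positivity
    have hP0 : posForm z = 0 :=
      le_antisymm (by simpa using (div_le_iff₀ hR).1 hP) (posForm_nonneg z)
    have hI0 : indefForm z = 0 := abs_nonpos_iff.1 (hP0 ▸ abs_indefForm_le z)
    have hM' := (div_le_iff₀ hη2).1 hM
    have hIM' := (div_le_iff₀ hη2).1 hIM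
    exact eq_of_posForm_eq_zero hP0 (by linarith)
  map_dilation ht z := by
    simp only [n2Gauge, posForm_foldDilation ht, indefForm_foldDilation ht,
      foldDilation_apply_two_sub, mul_max_of_nonneg _ _ ht]
    ring_nf

theorem isHomogeneousGauge_cylGauge (hη : 0 < η) (hR : 0 < R ^ 2) :
    IsHomogeneousGauge (foldDilation η) !₂[0, 0, η / 2, 0] (cylGauge η R) where
  continuous := by unfold cylGauge posForm; fun_prop
  nonneg z := le_max_of_le_left (div_nonneg (posForm_nonneg z) hR.le)
  eq_center z hz := by
    have hle : cylGauge η R z ≤ 0 := hz.le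
    simp only [cylGauge, max_le_iff] at hle
    obtain ⟨hP, hM⟩ := hle
    have hP0 : posForm z = 0 :=
      le_antisymm (by simpa using (div_le_iff₀ hR).1 hP) (posForm_nonneg z)
    have hM0 : |z 2 - η / 2| ≤ 0 := by simpa using (div_le_iff₀ (by positivity : 0 < η / 2)).1 hM
    exact eq_of_posForm_eq_zero hP0 (by linarith [abs_nonpos_iff.1 hM0])
  map_dilation ht z := by
    simp only [cylGauge, posForm_foldDilation ht, foldDilation_apply_two_sub,
      mul_max_of_nonneg _ _ ht, abs_mul, abs_of_nonneg ht]
    ring_nf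


theorem n2Gauge_le_mul_cylGauge (hη : 0 < η) (hR : 0 < R ^ 2) (z : ℝ⁴) :
    n2Gauge η R z ≤ (2 * R ^ 2 / η + 1) * cylGauge η R z := by
  set g := cylGauge η R z
  have hη2 : 0 < η / 2 := by positivity
  have hg : 0 ≤ g := (isHomogeneousGauge_cylGauge hη hR).nonneg z
  have hP : posForm z ≤ g * R ^ 2 := (div_le_iff₀ hR).1 (le_max_left _ _)
  have hM : |z 2 - η / 2| ≤ g * (η / 2) := (div_le_iff₀ hη2).1 (le_max_right _ _)
  have hI := abs_le.1 (abs_indefForm_le z)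
  have hM' := abs_le.1 hM
  have hC : (2 * R ^ 2 / η + 1) * g * η = 2 * R ^ 2 * g + η * g := by field_simp
  have hRg : 0 ≤ R ^ 2 * g := by positivity
  simp only [n2Gauge, max_le_iff, div_le_iff₀ hR, div_le_iff₀ hη, div_le_iff₀ hη2]
  refine ⟨?_, ?_, ?_, ?_⟩ <;> nlinarith

theorem cylGauge_le_three_mul_n2Gauge (hη : 0 < η) (hR : 0 < R ^ 2) (z : ℝ⁴) :
    cylGauge η R z ≤ 3 * n2Gauge η R z := by
  set g := n2Gauge η R z
  have hη2 : 0 < η / 2 := by positivity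
  have hg : 0 ≤ g := (isHomogeneousGauge_n2Gauge hη hR).nonneg z
  have hpieces : posForm z / R ^ 2 ≤ g ∧ -indefForm z / η ≤ g ∧ (z 2 - η / 2) / (η / 2) ≤ g ∧
      (indefForm z - (z 2 - η / 2)) / (η / 2) ≤ g := by
    simpa only [g, n2Gauge, max_le_iff] using le_refl g
  obtain ⟨hP, hI, hM, hIM⟩ := hpieces
  rw [div_le_iff₀ hη] at hI
  rw [div_le_iff₀ hη2] at hM hIM
  refine max_le (by linarith) ((div_le_iff₀ hη2).2 (abs_le.2 ⟨?_, ?_⟩)) <;> linarith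


theorem setOf_n2_eq_sublevel (hη : 0 < η) (hR : 0 < R ^ 2) :
    {z : ℝ⁴ | -η ≤ indefForm z ∧ indefForm z ≤ z 2 ∧ z 2 ≤ η ∧ posForm z ≤ R ^ 2} =
      {z | n2Gauge η R z ≤ 1} := by
  have hη2 : 0 < η / 2 := by positivity
  ext z
  simp only [mem_ofPred_eq, n2Gauge, max_le_iff, div_le_one hR, div_le_one hη, div_le_one hη2]
  constructor
  · rintro ⟨h₁, h₂, h₃, h₄⟩
    exact ⟨h₄, by linarith, by linarith, by linarith⟩
  · rintro ⟨h₁, h₂, h₃, h₄⟩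
    exact ⟨by linarith, by linarith, by linarith, h₁⟩

def cylinder (η R : ℝ) : Set ℝ⁴ := {z | posForm z ≤ R ^ 2 ∧ 0 ≤ z 2 ∧ z 2 ≤ η}

theorem cylinder_eq_sublevel (hη : 0 < η) (hR : 0 < R ^ 2) :
    cylinder η R = {z | cylGauge η R z ≤ 1} := by
  have hη2 : 0 < η / 2 := by positivity
  ext z
  simp only [cylinder, mem_ofPred_eq, cylGauge, max_le_iff, div_le_one hR, div_le_one hη2, abs_le]
  constructor
  · rintro ⟨h₁, h₂, h₃⟩
    exact ⟨h₁, by linarith, by linarith⟩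
  · rintro ⟨h₁, h₂, h₃⟩
    exact ⟨h₁, by linarith, by linarith⟩

theorem convexOn_posForm : ConvexOn ℝ univ posForm := by
  have hsq (i : Fin 4) : ConvexOn ℝ univ fun z : ℝ⁴ ↦ z i ^ 2 := by
    simpa [Function.comp_def] using (Even.convexOn_pow (𝕜 := ℝ) even_two).comp_linearMap
      (EuclideanSpace.proj (𝕜 := ℝ) i).toLinearMap
  exact ((hsq 0).add (hsq 1)).add (hsq 3)

theorem convex_cylinder : Convex ℝ (cylinder η R) := by
  have hP : Convex ℝ {z : ℝ⁴ | posForm z ≤ R ^ 2} := by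
    simpa using convexOn_posForm.convex_le (R ^ 2)
  exact hP.inter <|
    (convex_halfSpace_ge (EuclideanSpace.proj 2 : ℝ⁴ →L[ℝ] ℝ).isLinear 0).inter
      (convex_halfSpace_le (EuclideanSpace.proj 2 : ℝ⁴ →L[ℝ] ℝ).isLinear η)

theorem isBounded_cylinder : Bornology.IsBounded (cylinder η R) := by
  refine (Metric.isBounded_closedBall (x := 0) (r := √(R ^ 2 + η ^ 2))).subset fun z hz ↦ ?_
  obtain ⟨hP, h₀, hη⟩ := hz
  rw [Metric.mem_closedBall, dist_zero_right, EuclideanSpace.norm_eq, Fin.sum_univ_four]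
  refine Real.sqrt_le_sqrt ?_
  simp only [Real.norm_eq_abs, sq_abs]
  unfold posForm at hP
  nlinarith

theorem nonempty_homeomorph_cylinder_closedBall (hη : 0 < η) (hR : 0 < R ^ 2) :
    Nonempty (cylinder η R ≃ₜ Metric.closedBall (0 : ℝ⁴) 1) := by
  have hg := isHomogeneousGauge_cylGauge hη hR
  have hclosed : IsClosed (cylinder η R) := by
    rw [cylinder_eq_sublevel hη hR]
    exact isClosed_le hg.continuous continuous_const
  obtain ⟨e, -, he, -⟩ := exists_homeomorph_image_interior_closure_frontier_eq_unitBall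
    convex_cylinder
    ⟨_, cylinder_eq_sublevel hη hR ▸ hg.center_mem_interior (isDilation_foldDilation η)⟩
    isBounded_cylinder
  rw [hclosed.closure_eq] at he
  exact ⟨(e.image _).trans (Homeomorph.setCongr he)⟩

end FourBall

theorem N2_is_four_ball
    (η R : ℝ) (hη : 0 < η) (hηR : η < R ^ 2) :
    Nonempty
      (({p : EuclideanSpace ℝ (Fin 4) |
            -η ≤ p 0 ^ 2 - p 1 ^ 2 - p 3 ^ 2 ∧
            p 0 ^ 2 - p 1 ^ 2 - p 3 ^ 2 ≤ p 2 ∧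
            p 2 ≤ η ∧
            p 0 ^ 2 + p 1 ^ 2 + p 3 ^ 2 ≤ R ^ 2} : Set (EuclideanSpace ℝ (Fin 4))) ≃ₜ
        (Metric.closedBall (0 : EuclideanSpace ℝ (Fin 4)) 1 :
          Set (EuclideanSpace ℝ (Fin 4)))) := by
  have hR : 0 < R ^ 2 := hη.trans hηR
  obtain ⟨e₁⟩ := nonempty_homeomorph_sublevel (isDilation_foldDilation η)
    (isHomogeneousGauge_n2Gauge hη hR) (isHomogeneousGauge_cylGauge hη hR)
    (n2Gauge_le_mul_cylGauge hη hR) (cylGauge_le_three_mul_n2Gauge hη hR)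
  obtain ⟨e₂⟩ := nonempty_homeomorph_cylinder_closedBall hη hR
  exact ⟨((Homeomorph.setCongr (setOf_n2_eq_sublevel hη hR)).trans e₁).trans
    ((Homeomorph.setCongr (cylinder_eq_sublevel hη hR)).symm.trans e₂)⟩
end
end

section
/- Let η > 0 and R > 0 be real numbers. Then the subset N₃ = {(x,y,r,v) ∈ ℝ⁴ : y² + v² = x² + η, |x| ≤ R, |r| ≤ η} of ℝ⁴ is homeomorphic to the product of the circle S¹ and the closed unit disk in ℝ². (The attaching region N₃ of the piece N₂ is a solid torus S¹ × D², so N₂ is attached as a 2-handle.) -/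
/-!
Write a point of `N₃` as `(x, r)` in the rectangle `[-R, R] × [-η, η]` together with
`w = y + v i ∈ ℂ`. The defining equation says `‖w‖ = √(x ^ 2 + η) > 0`, so `w ↦ w / ‖w‖`
trivializes `N₃` as the rectangle times `S¹`. The rectangle is a bounded closed convex body
with nonempty interior in `ℝ²`, and gauge rescaling carries any such body homeomorphically
onto the closed unit disk.
-/

open Metric Set Bornology Topology

theorem Convex.nonempty_homeomorph_closedBall {E : Type*} [NormedAddCommGroup E]
    [NormedSpace ℝ E] {s : Set E} (hc : Convex ℝ s) (hne : (interior s).Nonempty)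
    (hb : IsBounded s) (hcl : IsClosed s) : Nonempty (s ≃ₜ closedBall (0 : E) 1) := by
  obtain ⟨h, -, hs, -⟩ :=
    exists_homeomorph_image_interior_closure_frontier_eq_unitBall hc hne hb
  rw [hcl.closure_eq] at hs
  exact ⟨(h.image s).trans (.setCongr hs)⟩

section Box

variable {ι : Type*} (c : ι → ℝ)

def euclideanBox : Set (EuclideanSpace ℝ ι) := {q | ∀ i, |q i| ≤ c i}

theorem convex_euclideanBox [Fintype ι] : Convex ℝ (euclideanBox c) := by
  simp only [euclideanBox, ofPred_forall]
  refine convex_iInter fun i => ?_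
  have : {q : EuclideanSpace ℝ ι | |q i| ≤ c i} =
      EuclideanSpace.proj i ⁻¹' closedBall 0 (c i) := by
    ext; simp
  rw [this]
  exact (convex_closedBall 0 (c i)).linear_preimage (EuclideanSpace.proj i).toLinearMap

theorem isClosed_euclideanBox : IsClosed (euclideanBox c) := by
  simp only [euclideanBox, ofPred_forall]
  exact isClosed_iInter fun i => isClosed_le (by fun_prop) continuous_const

theorem isBounded_euclideanBox [Fintype ι] : IsBounded (euclideanBox c) :=
  ((PiLp.antilipschitzWith_ofLp 2 _).isBounded_preimage (isBounded_Icc (-c) c)).subset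
    fun _ hq => ⟨fun i => (abs_le.1 (hq i)).1, fun i => (abs_le.1 (hq i)).2⟩

theorem euclideanBox_mem_nhds_zero [Finite ι] {c : ι → ℝ} (hc : ∀ i, 0 < c i) :
    euclideanBox c ∈ 𝓝 (0 : EuclideanSpace ℝ ι) :=
  Filter.eventually_all.2 fun i =>
    (continuous_abs.comp (EuclideanSpace.proj i).continuous).continuousAt.eventually
      (Iic_mem_nhds (by simpa using hc i))

theorem nonempty_euclideanBox_homeomorph_closedBall [Fintype ι] {c : ι → ℝ}
    (hc : ∀ i, 0 < c i) :
    Nonempty (euclideanBox c ≃ₜ closedBall (0 : EuclideanSpace ℝ ι) 1) :=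
  (convex_euclideanBox c).nonempty_homeomorph_closedBall
    ⟨0, mem_interior_iff_mem_nhds.2 (euclideanBox_mem_nhds_zero hc)⟩
    (isBounded_euclideanBox c) (isClosed_euclideanBox c)

end Box

section SphereBundle

variable {B E : Type*} [TopologicalSpace B] [NormedAddCommGroup E] [NormedSpace ℝ E]

def sphereBundle (s : Set B) (ρ : B → ℝ) : Set (B × E) :=
  {p | p.1 ∈ s ∧ ‖p.2‖ = ρ p.1}

variable {s : Set B} {ρ : B → ℝ}

noncomputable def sphereBundleHomeomorph (hρ : ContinuousOn ρ s) (hpos : ∀ b ∈ s, 0 < ρ b) :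
    (sphereBundle s ρ : Set (B × E)) ≃ₜ s × sphere (0 : E) 1 where
  toFun p := (⟨p.1.1, p.2.1⟩, ⟨(ρ p.1.1)⁻¹ • p.1.2, by
    obtain ⟨⟨b, w⟩, hb, hw⟩ := p
    simp [norm_smul, hw, abs_of_pos (hpos b hb), (hpos b hb).ne']⟩)
  invFun q := ⟨(q.1, ρ q.1 • (q.2 : E)), q.1.2, by
    obtain ⟨⟨b, hb⟩, w, hw⟩ := q
    simp [norm_smul, abs_of_pos (hpos b hb), mem_sphere_zero_iff_norm.1 hw]⟩
  left_inv := by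
    rintro ⟨⟨b, w⟩, hb, hw⟩
    simp [smul_smul, (hpos b hb).ne']
  right_inv := by
    rintro ⟨⟨b, hb⟩, w, hw⟩
    simp [smul_smul, (hpos b hb).ne']
  continuous_toFun := by
    have hρ' : Continuous fun p : (sphereBundle s ρ : Set (B × E)) => ρ p.1.1 :=
      hρ.comp_continuous (by fun_prop) fun p => p.2.1
    exact .prodMk (by fun_prop) (.subtype_mk ((hρ'.inv₀ fun p => (hpos _ p.2.1).ne').smul
      (by fun_prop)) _)
  continuous_invFun := by
    have hρ' : Continuous fun q : s × sphere (0 : E) 1 => ρ q.1 :=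
      hρ.comp_continuous (by fun_prop) fun q => q.1.2
    exact .subtype_mk (.prodMk (by fun_prop) (hρ'.smul (by fun_prop))) _

end SphereBundle

noncomputable def euclideanFin4EquivProdComplex :
    EuclideanSpace ℝ (Fin 4) ≃L[ℝ] EuclideanSpace ℝ (Fin 2) × ℂ :=
  LinearEquiv.toContinuousLinearEquiv
    { toFun p := (!₂[p 0, p 2], ⟨p 1, p 3⟩)
      invFun q := !₂[q.1 0, q.2.re, q.1 1, q.2.im]
      map_add' p q := Prod.ext (by ext i; fin_cases i <;> simp) (Complex.ext (by simp) (by simp))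
      map_smul' a p := Prod.ext (by ext i; fin_cases i <;> simp) (Complex.ext (by simp) (by simp))
      left_inv p := by ext i; fin_cases i <;> rfl
      right_inv q := Prod.ext (by ext i; fin_cases i <;> rfl) rfl }

theorem euclideanFin4EquivProdComplex_mem_sphereBundle_iff {η : ℝ} (R : ℝ) (hη : 0 < η)
    (p : EuclideanSpace ℝ (Fin 4)) :
    (p 1 ^ 2 + p 3 ^ 2 = p 0 ^ 2 + η ∧ |p 0| ≤ R ∧ |p 2| ≤ η) ↔
      euclideanFin4EquivProdComplex p ∈
        (sphereBundle (euclideanBox ![R, η]) (fun q => √(q 0 ^ 2 + η)) : Set (_ × ℂ)) := by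
  have : p 1 ^ 2 + p 3 ^ 2 = p 0 ^ 2 + η ↔ ‖(⟨p 1, p 3⟩ : ℂ)‖ = √(p 0 ^ 2 + η) := by
    rw [Complex.norm_def, Real.sqrt_inj (Complex.normSq_nonneg _) (by positivity),
      Complex.normSq_mk, ← sq, ← sq]
  simp [sphereBundle, euclideanBox, Fin.forall_fin_two, euclideanFin4EquivProdComplex, this,
    and_comm]

theorem attaching_region_is_solid_torus
    (η R : ℝ) (hη : 0 < η) (hR : 0 < R) :
    Nonempty
      (({p : EuclideanSpace ℝ (Fin 4) |
            p 1 ^ 2 + p 3 ^ 2 = p 0 ^ 2 + η ∧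
            |p 0| ≤ R ∧ |p 2| ≤ η} : Set (EuclideanSpace ℝ (Fin 4))) ≃ₜ
        Circle × (Metric.closedBall (0 : EuclideanSpace ℝ (Fin 2)) 1 :
          Set (EuclideanSpace ℝ (Fin 2)))) := by
  obtain ⟨box⟩ := nonempty_euclideanBox_homeomorph_closedBall (c := ![R, η])
    (by simp [Fin.forall_fin_two, hR, hη])
  have bundle := sphereBundleHomeomorph (E := ℂ) (s := euclideanBox ![R, η])
    (ρ := fun q => √(q 0 ^ 2 + η)) (by fun_prop) fun _ _ => by positivity
  -- `Circle` is by definition the unit sphere of `ℂ`.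
  exact ⟨(euclideanFin4EquivProdComplex.toHomeomorph.subtype
    (euclideanFin4EquivProdComplex_mem_sphereBundle_iff R hη)).trans <| bundle.trans <|
    (Homeomorph.prodComm _ _).trans <| (Homeomorph.refl _).prodCongr box⟩
end

section
/- The complement of the plane curve {x² = y²}, that is, the subspace {(x,y) ∈ ℂ × ℂ : x² ≠ y²}, is homeomorphic to (S¹ × S¹) × (ℝ × ℝ). (This is the topological form of the paper's conclusion from the Kirby diagram for p = q = 2: the complement of {x² − y² = 0} is the interior of T² × D², i.e. T² × ℝ².) -/
/-!
Since `x² - y² = (x + y)(x - y)`, the linear change of coordinates `(x, y) ↦ (x + y, x - y)`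
carries the complement of `{x² = y²}` onto `(ℂ ∖ {0}) × (ℂ ∖ {0})`, and polar coordinates
`z ↦ (z / ‖z‖, log ‖z‖)` identify `ℂ ∖ {0}` with `S¹ × ℝ`.
-/

theorem sq_ne_sq_iff_add_ne_zero_and_sub_ne_zero {R : Type*} [CommRing R] [NoZeroDivisors R]
    {x y : R} : x ^ 2 ≠ y ^ 2 ↔ x + y ≠ 0 ∧ x - y ≠ 0 := by
  rw [Ne, sq_eq_sq_iff_eq_or_eq_neg, not_or, Ne, Ne, sub_eq_zero, add_eq_zero_iff_eq_neg,
    and_comm]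

section

variable (K : Type*) [Field K] [TopologicalSpace K] [IsTopologicalRing K] [NeZero (2 : K)]

def Homeomorph.addSub : K × K ≃ₜ K × K where
  toFun z := (z.1 + z.2, z.1 - z.2)
  invFun w := ((w.1 + w.2) / 2, (w.1 - w.2) / 2)
  left_inv z := by ext <;> field_simp <;> ring
  right_inv w := by ext <;> field_simp <;> ring
  continuous_toFun := by fun_prop
  continuous_invFun := by fun_prop

def sqNeSqHomeomorph :
    {z : K × K | z.1 ^ 2 ≠ z.2 ^ 2} ≃ₜ ({0}ᶜ : Set K) × ({0}ᶜ : Set K) :=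
  ((Homeomorph.addSub K).subtype (q := (· ∈ ({0}ᶜ : Set K) ×ˢ ({0}ᶜ : Set K)))
    fun _ ↦ sq_ne_sq_iff_add_ne_zero_and_sub_ne_zero).trans (Homeomorph.Set.prod _ _)

end

noncomputable def Complex.complZeroHomeomorph : ({0}ᶜ : Set ℂ) ≃ₜ Circle × ℝ :=
  -- `Circle` is by definition the unit sphere of `ℂ`, so `refl` matches the sphere factor.
  (homeomorphUnitSphereProd ℂ).trans
    ((Homeomorph.refl Circle).prodCongr Real.expOrderIso.toHomeomorph.symm)

theorem complement_of_two_lines_is_torus_times_plane :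
    Nonempty
      (({z : ℂ × ℂ | z.1 ^ 2 ≠ z.2 ^ 2} : Set (ℂ × ℂ)) ≃ₜ
        (Circle × Circle) × (ℝ × ℝ)) :=
  ⟨(sqNeSqHomeomorph ℂ).trans <|
    (Complex.complZeroHomeomorph.prodCongr Complex.complZeroHomeomorph).trans
      (Homeomorph.prodProdProdComm _ _ _ _)⟩
end
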